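/- Let u ∈ W with a reduced decomposition u = s_{j_l}⋯s_{j_1} and associated λ-sequence α^a = s_{j_1}⋯s_{j_{a−1}}(α_{j_a}) for 1 ≤ a ≤ l. Fix 1 ≤ r ≤ i ≤ l, w ∈ W and ν ∈ {ν_sht, ν_lng}. For β ∈ R set f(β) = 1 if ν_β = ν and w^{-1}(β) ∈ R_−, and f(β) = 0 otherwise; set g(β) = 0 if w^{-1}(β) ∈ R_+ and g(β) = −(ρ_ν^∨, w^{-1}(β)) if w^{-1}(β) ∈ R_−. Then g(α^i) + Σ_{a=r}^{i−1} f(s_{α^i}(α^a)) ≥ Σ_{a=r}^{i} f(α^a). -/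

import Mathlib

open scoped RealInnerProductSpace Classical

noncomputable section

/-- Euclidean space ℝⁿ. -/
abbrev EV (n : ℕ) := EuclideanSpace ℝ (Fin n)

/-- ν_α = (α,α)/2. -/
def nuu {n : ℕ} (α : EV n) : ℝ := ⟪α, α⟫ / 2

/-- α^∨ = 2α/(α,α). -/
def coroot {n : ℕ} (α : EV n) : EV n := (2 / ⟪α, α⟫) • α

/-- the reflection s_α. -/
def srefl {n : ℕ} (α : EV n) : EV n → EV n :=
  fun z => z - (2 * ⟪z, α⟫ / ⟪α, α⟫) • α

/-- the affine reflection s_ã attached to ã = [α, ν_α j], acting linearly on ℝⁿ × ℝ. -/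
def aRefl {n : ℕ} (p : EV n × ℝ) : EV n × ℝ → EV n × ℝ :=
  fun z => z - (2 * ⟪z.1, p.1⟫ / ⟪p.1, p.1⟫) • p

/-- the translation element b' ∈ Ŵ, b'([z,ζ]) = [z, ζ − (z,b)]. -/
def transl {n : ℕ} (b : EV n) : EV n × ℝ → EV n × ℝ :=
  fun z => (z.1, z.2 - ⟪z.1, b⟫)

/-- extension of a nonaffine transformation to ℝⁿ × ℝ. -/
def affExt {n : ℕ} (w : EV n → EV n) : EV n × ℝ → EV n × ℝ :=
  fun z => (w z.1, z.2)

/-- An irreducible reduced crystallographic root system in ℝⁿ, with a fixed system of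
positive/simple roots, normalized so that (α,α) = 2 for short roots; `hishort` is the
highest short root ϑ and `hiroot` the highest root θ. -/
structure RootCtx (n : ℕ) where
  R : Finset (EV n)
  pos : Finset (EV n)
  simple : Fin n → EV n
  hishort : EV n
  hiroot : EV n
  nonzero : ∀ α ∈ R, α ≠ (0 : EV n)
  neg_mem : ∀ α ∈ R, -α ∈ R
  reduced : ∀ α ∈ R, ∀ t : ℝ, t • α ∈ R → t = 1 ∨ t = -1
  crys : ∀ α ∈ R, ∀ β ∈ R, ∃ m : ℤ, 2 * ⟪β, α⟫ / ⟪α, α⟫ = (m : ℝ)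
  reflect_mem : ∀ α ∈ R, ∀ β ∈ R, β - (2 * ⟪β, α⟫ / ⟪α, α⟫) • α ∈ R
  span_top : Submodule.span ℝ (R : Set (EV n)) = ⊤
  pos_subset : pos ⊆ R
  pos_iff : ∀ α ∈ R, (α ∈ pos ↔ -α ∉ pos)
  simple_pos : ∀ i, simple i ∈ pos
  simple_inj : Function.Injective simple
  pos_sum : ∀ α ∈ pos, ∃ f : Fin n → ℕ, α = ∑ i, (f i : ℝ) • simple i
  irred : ∀ S : Finset (EV n), S ⊆ R → S.Nonempty →
      (∀ α ∈ S, ∀ β ∈ R, β ∉ S → ⟪α, β⟫ = 0) → S = R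
  normalized : ∀ α ∈ R, (∀ β ∈ R, ⟪α, α⟫ ≤ ⟪β, β⟫) → ⟪α, α⟫ = 2
  hishort_pos : hishort ∈ pos
  hishort_short : ⟪hishort, hishort⟫ = 2
  hishort_high : ∀ α ∈ R, ⟪α, α⟫ = 2 →
      ∃ f : Fin n → ℕ, hishort - α = ∑ i, (f i : ℝ) • simple i
  hiroot_pos : hiroot ∈ pos
  hiroot_high : ∀ α ∈ R, ∃ f : Fin n → ℕ, hiroot - α = ∑ i, (f i : ℝ) • simple i

namespace RootCtx

variable {n : ℕ} (c : RootCtx n)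

/-- word in the simple reflections of W; the letters are listed in the order of
application (the first letter of the list acts first), so `[i₁, …, i_l]`
represents s_{i_l} ⋯ s_{i_1}. -/
def wWord (L : List (Fin n)) : EV n → EV n :=
  L.foldl (fun f i => srefl (c.simple i) ∘ f) id

/-- membership in the Weyl group W. -/
def IsWeyl (w : EV n → EV n) : Prop := ∃ L : List (Fin n), w = c.wWord L

/-- λ(w) = {α ∈ R₊ : w(α) ∈ R₋}. -/
def lamW (w : EV n → EV n) : Finset (EV n) :=
  c.pos.filter (fun α => -(w α) ∈ c.pos)

/-- λ_ν(w). -/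
def lamWnu (w : EV n → EV n) (ν : ℝ) : Finset (EV n) :=
  (c.lamW w).filter (fun α => nuu α = ν)

/-- the length l(w) = |λ(w)| of w ∈ W. -/
def lenW (w : EV n → EV n) : ℕ := (c.lamW w).card

/-- ρ_ν = (1/2) Σ_{α ∈ R₊, ν_α = ν} α. -/
def rho (ν : ℝ) : EV n :=
  (1 / 2 : ℝ) • ∑ α ∈ c.pos.filter (fun α => nuu α = ν), α

/-- ρ_ν^∨ = ρ_ν / ν. -/
def rhoCheck (ν : ℝ) : EV n := ν⁻¹ • c.rho ν

/-- the affine root system R̃ ⊂ ℝⁿ × ℝ. -/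
def aR : Set (EV n × ℝ) := {p | ∃ α ∈ c.R, ∃ j : ℤ, p = (α, nuu α * j)}

/-- positive affine roots. -/
def aPos : Set (EV n × ℝ) :=
  {p | p ∈ c.aR ∧ (0 < p.2 ∨ (p.2 = 0 ∧ p.1 ∈ c.pos))}

/-- negative affine roots. -/
def aNeg : Set (EV n × ℝ) := {p | -p ∈ c.aPos}

/-- the affine simple roots α_0, α_1, …, α_n; the index 0 corresponds to
α₀ = [−ϑ, 1]. -/
def asimple : Fin (n + 1) → EV n × ℝ :=
  fun i => if h : i = 0 then (-c.hishort, (1 : ℝ)) else (c.simple (i.pred h), (0 : ℝ))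

/-- the affine simple reflections s_0, s_1, …, s_n. -/
def aS (i : Fin (n + 1)) : EV n × ℝ → EV n × ℝ := aRefl (c.asimple i)

/-- word in the affine simple reflections (letters in order of application). -/
def affWord (L : List (Fin (n + 1))) : EV n × ℝ → EV n × ℝ :=
  L.foldl (fun f i => c.aS i ∘ f) id

/-- the weight lattice P. -/
def PwSet : Set (EV n) :=
  {b | ∀ i, ∃ m : ℤ, 2 * ⟪b, c.simple i⟫ / ⟪c.simple i, c.simple i⟫ = (m : ℝ)}

/-- the dominant weights P₊. -/
def PplusSet : Set (EV n) :=
  {b | b ∈ c.PwSet ∧ ∀ i, 0 ≤ ⟪b, c.simple i⟫}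

/-- membership in the extended affine Weyl group Ŵ = W ⋉ P,
via the normal form w·b' with w ∈ W and b ∈ P. -/
def IsExtW (f : EV n × ℝ → EV n × ℝ) : Prop :=
  ∃ w b, c.IsWeyl w ∧ b ∈ c.PwSet ∧ f = affExt w ∘ transl b

/-- membership in Π = {π ∈ Ŵ : π(R̃₊) = R̃₊}. -/
def IsPi (f : EV n × ℝ → EV n × ℝ) : Prop :=
  c.IsExtW f ∧ f '' c.aPos = c.aPos

/-- the λ-set λ(ŵ) = R̃₊ ∩ ŵ⁻¹(R̃₋) of an affine transformation. -/
def aLam (f : EV n × ℝ → EV n × ℝ) : Set (EV n × ℝ) :=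
  {p | p ∈ c.aPos ∧ f p ∈ c.aNeg}

/-- the ν-part λ_ν(ŵ). -/
def aLamNu (f : EV n × ℝ → EV n × ℝ) (ν : ℝ) : Set (EV n × ℝ) :=
  {p | p ∈ c.aLam f ∧ nuu p.1 = ν}

/-- the length l(ŵ) = |λ(ŵ)|. -/
def aLen (f : EV n × ℝ → EV n × ℝ) : ℕ := (c.aLam f).ncard

/-- `(π, L)` is a reduced decomposition ŵ = π_r s_{i_l} ⋯ s_{i_1}: π ∈ Π and
the word length is minimal among all such presentations of the same element. -/
def IsReducedA (π : EV n × ℝ → EV n × ℝ) (L : List (Fin (n + 1))) : Prop :=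
  c.IsPi π ∧
    ∀ (π' : EV n × ℝ → EV n × ℝ) (L' : List (Fin (n + 1))),
      c.IsPi π' → π' ∘ c.affWord L' = π ∘ c.affWord L → L.length ≤ L'.length

/-- the λ-sequence α̃¹, α̃², … of a word (0-based indexing):
α̃^{k+1} = s_{i_1} s_{i_2} ⋯ s_{i_k}(α_{i_{k+1}}). -/
def lamSeq (L : List (Fin (n + 1))) (k : Fin L.length) : EV n × ℝ :=
  ((L.take k).foldr (fun i f => c.aS i ∘ f) id) (c.asimple (L.get k))

/-- the λ-sequence of a word in W (0-based indexing). -/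
def lamSeqW (L : List (Fin n)) (k : Fin L.length) : EV n :=
  ((L.take k).foldr (fun i f => srefl (c.simple i) ∘ f) id) (c.simple (L.get k))

end RootCtx

/-!
Write `v = w⁻¹`, `β = αⁱ`, `x = s_{j_r} ⋯ s_{j_1}` and `y = s_{j_i} ⋯ s_{j_1}`, so that
`{α^a : r ≤ a < i} = λ(y) ∖ λ(x)` and `y(β)` is the simple root `α_{j_i}`.
The roots `z` of this set with `x(s_β z) ∈ R₊` are permuted by `s_β`, so they contribute equally
to both sides; for the others `(z, β) > 0`.
If `v(β) ∈ R₊` this gives `f(z) ≤ f(s_β z)` termwise.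
Otherwise put `γ = -v(β) ∈ R₊`: each `z` with `f(z) = 1 > f(s_β z)` produces two roots
`-v(z)`, `v(s_β z)` of `λ_ν(s_γ)`, all distinct from each other and from `γ`.
Since `2ν (ρ_ν^∨, γ) = Σ_{α ∈ λ_ν(s_γ)} (α, γ)`, each term is at least `ν` by integrality of
`⟨γ, α^∨⟩`, and `(γ, γ) = 2ν` when `ν_γ = ν`, the number of such `z` is at most `g(β) - f(β)`.
-/

section Reflection

variable {n : ℕ}

lemma srefl_add (α x y : EV n) : srefl α (x + y) = srefl α x + srefl α y := by
  simp only [srefl, inner_add_left]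
  match_scalars <;> ring

lemma srefl_smul (α : EV n) (t : ℝ) (x : EV n) : srefl α (t • x) = t • srefl α x := by
  simp only [srefl, real_inner_smul_left]
  match_scalars <;> ring

lemma srefl_neg (α x : EV n) : srefl α (-x) = -srefl α x := by
  simpa using srefl_smul α (-1) x

lemma inner_srefl_srefl {α : EV n} (hα : ⟪α, α⟫ ≠ 0) (x y : EV n) :
    ⟪srefl α x, srefl α y⟫ = ⟪x, y⟫ := by
  simp only [srefl, inner_sub_left, inner_sub_right, real_inner_smul_left,
    real_inner_smul_right, real_inner_comm α y]
  field_simp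
  ring

lemma srefl_srefl {α : EV n} (hα : ⟪α, α⟫ ≠ 0) (x : EV n) : srefl α (srefl α x) = x := by
  simp only [srefl, inner_sub_left, real_inner_smul_left]
  field_simp
  module

lemma neg_srefl_neg_srefl {α : EV n} (hα : ⟪α, α⟫ ≠ 0) (x : EV n) :
    -srefl α (-srefl α x) = x := by
  rw [srefl_neg, neg_neg, srefl_srefl hα]

lemma srefl_self {α : EV n} (hα : ⟪α, α⟫ ≠ 0) : srefl α α = -α := by
  simp only [srefl]
  field_simp
  module

lemma srefl_neg_left (α : EV n) : srefl (-α) = srefl α := by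
  funext x
  simp only [srefl, inner_neg_right, inner_neg_left, neg_neg]
  module

lemma inner_srefl_self {α : EV n} (hα : ⟪α, α⟫ ≠ 0) (x : EV n) :
    ⟪srefl α x, α⟫ = -⟪x, α⟫ := by
  simp only [srefl, inner_sub_left, real_inner_smul_left]
  field_simp
  ring

lemma nuu_neg (x : EV n) : nuu (-x) = nuu x := by
  simp only [nuu, inner_neg_neg]

end Reflection

namespace RootCtx

variable {n : ℕ} (c : RootCtx n)

structure IsRootIsometry (W : EV n → EV n) : Prop where
  inner_map_map : ∀ x y, ⟪W x, W y⟫ = ⟪x, y⟫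
  map_add : ∀ x y, W (x + y) = W x + W y
  map_smul : ∀ (t : ℝ) x, W (t • x) = t • W x
  map_mem : ∀ α ∈ c.R, W α ∈ c.R

lemma inner_self_pos {α : EV n} (hα : α ∈ c.R) : 0 < ⟪α, α⟫ :=
  real_inner_self_pos.mpr (c.nonzero α hα)

lemma nuu_pos {α : EV n} (hα : α ∈ c.R) : 0 < nuu α :=
  half_pos (c.inner_self_pos hα)

lemma inner_self_ne_zero {α : EV n} (hα : α ∈ c.R) : ⟪α, α⟫ ≠ 0 :=
  (c.inner_self_pos hα).ne'

lemma mem_R_of_mem_pos {α : EV n} (hα : α ∈ c.pos) : α ∈ c.R := c.pos_subset hα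

lemma neg_mem_pos_iff {α : EV n} (hα : α ∈ c.R) : -α ∈ c.pos ↔ α ∉ c.pos := by
  rw [c.pos_iff α hα, not_not]

lemma neg_notMem_pos {α : EV n} (hα : α ∈ c.pos) : -α ∉ c.pos :=
  (c.pos_iff α (c.mem_R_of_mem_pos hα)).mp hα

lemma simple_mem_R (i : Fin n) : c.simple i ∈ c.R := c.mem_R_of_mem_pos (c.simple_pos i)

lemma isRootIsometry_id : c.IsRootIsometry id :=
  ⟨fun _ _ => rfl, fun _ _ => rfl, fun _ _ => rfl, fun _ hα => hα⟩

lemma srefl_mem_R {α β : EV n} (hα : α ∈ c.R) (hβ : β ∈ c.R) : srefl α β ∈ c.R :=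
  c.reflect_mem α hα β hβ

lemma isRootIsometry_srefl {α : EV n} (hα : α ∈ c.R) : c.IsRootIsometry (srefl α) :=
  ⟨inner_srefl_srefl (c.inner_self_ne_zero hα), srefl_add α, srefl_smul α,
    fun _ hβ => c.srefl_mem_R hα hβ⟩

namespace IsRootIsometry

variable {c} {W V : EV n → EV n}

lemma comp (hW : c.IsRootIsometry W) (hV : c.IsRootIsometry V) : c.IsRootIsometry (W ∘ V) :=
  ⟨fun x y => by simp only [Function.comp_apply, hW.inner_map_map, hV.inner_map_map],
    fun x y => by simp only [Function.comp_apply, hV.map_add, hW.map_add],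
    fun t x => by simp only [Function.comp_apply, hV.map_smul, hW.map_smul],
    fun α hα => hW.map_mem _ (hV.map_mem α hα)⟩

lemma map_neg (hW : c.IsRootIsometry W) (x : EV n) : W (-x) = -W x := by
  simpa using hW.map_smul (-1) x

lemma map_sub (hW : c.IsRootIsometry W) (x y : EV n) : W (x - y) = W x - W y := by
  rw [sub_eq_add_neg, hW.map_add, hW.map_neg, sub_eq_add_neg]

lemma injective (hW : c.IsRootIsometry W) : Function.Injective W := by
  intro x y hxy
  rw [← sub_eq_zero, ← inner_self_eq_zero (𝕜 := ℝ), ← hW.inner_map_map, hW.map_sub, hxy, sub_self,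
    inner_zero_left]

lemma nuu_map (hW : c.IsRootIsometry W) (x : EV n) : nuu (W x) = nuu x := by
  simp only [nuu, hW.inner_map_map]

lemma map_srefl (hW : c.IsRootIsometry W) (α x : EV n) : W (srefl α x) = srefl (W α) (W x) := by
  simp only [srefl, hW.map_sub, hW.map_smul, hW.inner_map_map]

end IsRootIsometry

lemma mem_span_simple_of_mem_pos {α : EV n} (hα : α ∈ c.pos) :
    α ∈ Submodule.span ℝ (Set.range c.simple) := by
  obtain ⟨f, rfl⟩ := c.pos_sum α hα
  exact Submodule.sum_mem _ fun i _ => Submodule.smul_mem _ _ (Submodule.subset_span ⟨i, rfl⟩)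

lemma top_le_span_simple : ⊤ ≤ Submodule.span ℝ (Set.range c.simple) := by
  rw [← c.span_top, Submodule.span_le]
  intro α hα
  by_cases hpos : α ∈ c.pos
  · exact c.mem_span_simple_of_mem_pos hpos
  · simpa using Submodule.neg_mem _
      (c.mem_span_simple_of_mem_pos ((c.neg_mem_pos_iff hα).mpr hpos))

def simpleBasis : Module.Basis (Fin n) ℝ (EV n) :=
  Module.Basis.mk (linearIndependent_of_top_le_span_of_card_eq_finrank c.top_le_span_simple
    (by simp)) c.top_le_span_simple

lemma simpleBasis_apply (j : Fin n) : c.simpleBasis j = c.simple j := Module.Basis.mk_apply _ _ _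

lemma repr_nonneg_of_mem_pos {α : EV n} (hα : α ∈ c.pos) (j : Fin n) :
    0 ≤ c.simpleBasis.repr α j := by
  obtain ⟨f, rfl⟩ := c.pos_sum α hα
  simp_rw [← c.simpleBasis_apply, Module.Basis.repr_sum_self]
  positivity

def height : EV n →ₗ[ℝ] ℝ := c.simpleBasis.sumCoords

lemma height_pos {α : EV n} (hα : α ∈ c.pos) : 0 < c.height α := by
  obtain ⟨f, hf⟩ := c.pos_sum α hα
  have hheight : c.height α = ∑ i, (f i : ℝ) := by
    simp [hf, height, ← c.simpleBasis_apply]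
  rw [hheight]
  refine lt_of_le_of_ne (by positivity) fun hzero => c.nonzero α (c.mem_R_of_mem_pos hα) ?_
  have hf0 : ∀ i, (f i : ℝ) = 0 := fun i =>
    (Finset.sum_eq_zero_iff_of_nonneg fun i _ => Nat.cast_nonneg (f i)).mp hzero.symm i
      (Finset.mem_univ i)
  simp [hf, hf0]

lemma pos_of_add_eq_smul {p q s : EV n} (hp : p ∈ c.pos) (hq : q ∈ c.pos) (hs : s ∈ c.pos)
    {k : ℝ} (hsum : p + q = k • s) : 0 < k := by
  have hheight : c.height p + c.height q = k * c.height s := by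
    rw [← map_add, hsum, map_smul, smul_eq_mul]
  have := c.height_pos hp
  have := c.height_pos hq
  exact pos_of_mul_pos_left (hheight ▸ by positivity) (c.height_pos hs).le

lemma inner_pos_of_neg_srefl_mem_pos {α γ : EV n} (hα : α ∈ c.pos) (hγ : γ ∈ c.pos)
    (hneg : -srefl γ α ∈ c.pos) : 0 < ⟪α, γ⟫ := by
  have hsum : -srefl γ α + α = (2 * ⟪α, γ⟫ / ⟪γ, γ⟫) • γ := by
    rw [srefl]
    abel
  have hk := c.pos_of_add_eq_smul hneg hα hγ hsum
  exact pos_of_mul_pos_right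
    ((div_pos_iff_of_pos_right (c.inner_self_pos (c.mem_R_of_mem_pos hγ))).mp hk) zero_le_two

lemma srefl_simple_mem_pos {j : Fin n} {β : EV n} (hβ : β ∈ c.pos) (hne : β ≠ c.simple j) :
    srefl (c.simple j) β ∈ c.pos := by
  have hβR := c.mem_R_of_mem_pos hβ
  by_contra hneg
  have hq : -srefl (c.simple j) β ∈ c.pos :=
    (c.neg_mem_pos_iff (c.srefl_mem_R (c.simple_mem_R j) hβR)).mpr hneg
  have hsum : β + -srefl (c.simple j) β =
      (2 * ⟪β, c.simple j⟫ / ⟪c.simple j, c.simple j⟫) • c.simple j := by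
    rw [srefl]
    abel
  have hcoord : ∀ m ≠ j, c.simpleBasis.repr β m = 0 := by
    intro m hm
    have hj : c.simpleBasis.repr (c.simple j) m = 0 := by
      simp [← c.simpleBasis_apply, hm.symm]
    have h := congrArg (fun x => c.simpleBasis.repr x m) hsum
    simp only [map_add, map_smul, Finsupp.add_apply, Finsupp.smul_apply, hj, smul_zero] at h
    linarith [c.repr_nonneg_of_mem_pos hβ m, c.repr_nonneg_of_mem_pos hq m]
  have hβeq : β = c.simpleBasis.repr β j • c.simple j := by
    conv_lhs => rw [← c.simpleBasis.sum_repr β]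
    rw [Finset.sum_eq_single j (fun m _ hm => by rw [hcoord m hm, zero_smul]) (by simp),
      c.simpleBasis_apply]
  rcases c.reduced _ (c.simple_mem_R j) _ (hβeq ▸ hβR) with h | h
  · exact hne (by rw [hβeq, h, one_smul])
  · linarith [c.repr_nonneg_of_mem_pos hβ j]

lemma mem_lamW {u : EV n → EV n} {δ : EV n} : δ ∈ c.lamW u ↔ δ ∈ c.pos ∧ -(u δ) ∈ c.pos :=
  Finset.mem_filter

lemma lamW_id : c.lamW id = ∅ :=
  Finset.filter_false_of_mem fun _ hα => c.neg_notMem_pos hα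

lemma lamW_srefl_comp_subset {u : EV n → EV n} (hu : c.IsRootIsometry u) {ξ : EV n} {j : Fin n}
    (hξ : u ξ = c.simple j) : c.lamW (srefl (c.simple j) ∘ u) ⊆ insert ξ (c.lamW u) := by
  intro δ hδ
  obtain ⟨hδpos, hneg⟩ := c.mem_lamW.mp hδ
  rw [Finset.mem_insert, c.mem_lamW]
  by_cases hδξ : δ = ξ
  · exact Or.inl hδξ
  refine Or.inr ⟨hδpos, (c.neg_mem_pos_iff (hu.map_mem δ (c.mem_R_of_mem_pos hδpos))).mpr ?_⟩
  intro huδ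
  have hne : u δ ≠ c.simple j := fun h => hδξ (hu.injective (h.trans hξ.symm))
  exact c.neg_notMem_pos (c.srefl_simple_mem_pos huδ hne) hneg

lemma foldl_srefl_comp (M : List (Fin n)) (g : EV n → EV n) :
    M.foldl (fun f i => srefl (c.simple i) ∘ f) g = c.wWord M ∘ g := by
  induction M generalizing g with
  | nil => rfl
  | cons i M ih =>
    show M.foldl _ (srefl (c.simple i) ∘ g) = M.foldl _ (srefl (c.simple i) ∘ id) ∘ g
    rw [ih, ih]
    rfl

lemma wWord_cons (i : Fin n) (M : List (Fin n)) :
    c.wWord (i :: M) = c.wWord M ∘ srefl (c.simple i) :=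
  c.foldl_srefl_comp M _

lemma isRootIsometry_wWord (M : List (Fin n)) : c.IsRootIsometry (c.wWord M) := by
  induction M with
  | nil => exact c.isRootIsometry_id
  | cons i M ih => rw [c.wWord_cons]; exact ih.comp (c.isRootIsometry_srefl (c.simple_mem_R i))

lemma IsWeyl.isRootIsometry {w : EV n → EV n} (hw : c.IsWeyl w) : c.IsRootIsometry w := by
  obtain ⟨L, rfl⟩ := hw
  exact c.isRootIsometry_wWord L

lemma wWord_foldr_srefl (M : List (Fin n)) (x : EV n) :
    c.wWord M (M.foldr (fun i f => srefl (c.simple i) ∘ f) id x) = x := by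
  induction M with
  | nil => rfl
  | cons i M ih =>
    rw [c.wWord_cons, List.foldr_cons, Function.comp_apply, Function.comp_apply,
      srefl_srefl (c.inner_self_ne_zero (c.simple_mem_R i)), ih]

def wPrefix (L : List (Fin n)) (a : ℕ) : EV n → EV n := c.wWord (L.take a)

variable (L : List (Fin n))

lemma wPrefix_of_length_le {a : ℕ} (ha : L.length ≤ a) : c.wPrefix L a = c.wWord L := by
  rw [wPrefix, List.take_of_length_le ha]

lemma wPrefix_lamSeqW (k : Fin L.length) : c.wPrefix L k (c.lamSeqW L k) = c.simple (L.get k) :=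
  c.wWord_foldr_srefl _ _

lemma wPrefix_succ (k : Fin L.length) :
    c.wPrefix L (k + 1) = srefl (c.simple (L.get k)) ∘ c.wPrefix L k := by
  simp only [wPrefix, wWord, List.take_add_one, List.getElem?_eq_getElem k.isLt, Option.toList_some,
    List.foldl_append, List.foldl_cons, List.foldl_nil, List.get_eq_getElem]

lemma lamW_wPrefix_succ_subset (k : Fin L.length) :
    c.lamW (c.wPrefix L (k + 1)) ⊆ insert (c.lamSeqW L k) (c.lamW (c.wPrefix L k)) := by
  rw [c.wPrefix_succ]
  exact c.lamW_srefl_comp_subset (c.isRootIsometry_wWord _) (c.wPrefix_lamSeqW L k)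

lemma card_lamW_wPrefix_le {a b : ℕ} (hab : a ≤ b) :
    (c.lamW (c.wPrefix L b)).card ≤ (c.lamW (c.wPrefix L a)).card + (b - a) := by
  induction b, hab using Nat.le_induction with
  | base => simp
  | succ b hab ih =>
    by_cases hb : b < L.length
    · calc (c.lamW (c.wPrefix L (b + 1))).card
          ≤ (insert (c.lamSeqW L ⟨b, hb⟩) (c.lamW (c.wPrefix L b))).card :=
            Finset.card_le_card (c.lamW_wPrefix_succ_subset L ⟨b, hb⟩)
        _ ≤ (c.lamW (c.wPrefix L b)).card + 1 := Finset.card_insert_le _ _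
        _ ≤ _ := by omega
    · rw [c.wPrefix_of_length_le L (by omega : L.length ≤ b + 1),
        ← c.wPrefix_of_length_le L (by omega : L.length ≤ b)]
      exact ih.trans (by omega)

section Reduced

variable {c L} (hred : L.length = c.lenW (c.wWord L))
include hred

lemma card_lamW_wPrefix {a : ℕ} (ha : a ≤ L.length) : (c.lamW (c.wPrefix L a)).card = a := by
  have hupper := c.card_lamW_wPrefix_le L (Nat.zero_le a)
  have hlower := c.card_lamW_wPrefix_le L ha
  have hzero : c.lamW (c.wPrefix L 0) = ∅ := c.lamW_id
  rw [hzero, Finset.card_empty] at hupper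
  rw [c.wPrefix_of_length_le L le_rfl, ← lenW, ← hred] at hlower
  omega

lemma lamW_wPrefix_succ (k : Fin L.length) :
    c.lamW (c.wPrefix L (k + 1)) = insert (c.lamSeqW L k) (c.lamW (c.wPrefix L k)) := by
  refine Finset.eq_of_subset_of_card_le (c.lamW_wPrefix_succ_subset L k) ?_
  rw [card_lamW_wPrefix hred k.isLt]
  exact (Finset.card_insert_le _ _).trans_eq (by rw [card_lamW_wPrefix hred k.isLt.le])

lemma lamW_wPrefix {a : ℕ} (ha : a ≤ L.length) :
    c.lamW (c.wPrefix L a) =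
      (Finset.univ.filter fun k : Fin L.length => (k : ℕ) < a).image (c.lamSeqW L) := by
  induction a with
  | zero =>
    rw [show c.wPrefix L 0 = id from rfl, c.lamW_id]
    simp
  | succ a ih =>
    have hfilter : (Finset.univ.filter fun k : Fin L.length => (k : ℕ) < a + 1) =
        insert ⟨a, ha⟩ (Finset.univ.filter fun k : Fin L.length => (k : ℕ) < a) := by
      ext k
      simp only [Finset.mem_filter, Finset.mem_univ, true_and, Finset.mem_insert, Fin.ext_iff]
      omega
    rw [hfilter, Finset.image_insert, ← ih (by omega)]
    exact lamW_wPrefix_succ hred ⟨a, ha⟩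

lemma lamSeqW_injective : Function.Injective (c.lamSeqW L) := by
  have hcard := card_lamW_wPrefix hred le_rfl
  rw [lamW_wPrefix hred le_rfl, Finset.filter_true_of_mem fun k _ => k.isLt] at hcard
  exact Set.injOn_univ.mp (by simpa using Finset.card_image_iff.mp (hcard.trans (by simp)))

lemma lamSeqW_mem_pos (k : Fin L.length) : c.lamSeqW L k ∈ c.pos := by
  have hmem : c.lamSeqW L k ∈ c.lamW (c.wPrefix L (k + 1)) := by
    rw [lamW_wPrefix_succ hred]
    exact Finset.mem_insert_self _ _
  exact (c.mem_lamW.mp hmem).1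

lemma lamW_wPrefix_mono {a b : ℕ} (hab : a ≤ b) (hb : b ≤ L.length) :
    c.lamW (c.wPrefix L a) ⊆ c.lamW (c.wPrefix L b) := by
  rw [lamW_wPrefix hred (hab.trans hb), lamW_wPrefix hred hb]
  exact Finset.image_subset_image (Finset.monotone_filter_right _ fun k hk => by omega)

lemma sum_filter_lamSeqW (F : EV n → ℝ) (r i : Fin L.length) :
    ∑ a ∈ Finset.univ.filter (fun a : Fin L.length => r ≤ a ∧ a < i), F (c.lamSeqW L a) =
      ∑ z ∈ c.lamW (c.wPrefix L i) \ c.lamW (c.wPrefix L r), F z := by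
  rw [lamW_wPrefix hred i.isLt.le, lamW_wPrefix hred r.isLt.le,
    ← Finset.image_sdiff _ _ (lamSeqW_injective hred),
    Finset.sum_image fun _ _ _ _ h => lamSeqW_injective hred h]
  congr 1
  ext a
  simp only [Finset.mem_filter, Finset.mem_univ, true_and, Finset.mem_sdiff, Fin.le_def,
    Fin.lt_def]
  omega

end Reduced

lemma nuu_le_inner {α γ : EV n} (hα : α ∈ c.R) (hγ : γ ∈ c.R) (hpos : 0 < ⟪α, γ⟫) :
    nuu α ≤ ⟪α, γ⟫ := by
  obtain ⟨m, hm⟩ := c.crys α hα γ hγ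
  have hαα := c.inner_self_pos hα
  rw [real_inner_comm] at hm
  have hm_pos : (0 : ℝ) < m := by rw [← hm]; positivity
  have hm_one : (1 : ℝ) ≤ m := by exact_mod_cast (show (0 : ℤ) < m by exact_mod_cast hm_pos)
  rw [← hm, le_div_iff₀ hαα] at hm_one
  rw [nuu]
  linarith

lemma mem_lamWnu {u : EV n → EV n} {ν : ℝ} {α : EV n} :
    α ∈ c.lamWnu u ν ↔ (α ∈ c.pos ∧ -(u α) ∈ c.pos) ∧ nuu α = ν := by
  rw [lamWnu, Finset.mem_filter, c.mem_lamW]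

lemma le_inner_of_mem_lamWnu_srefl {γ : EV n} (hγ : γ ∈ c.pos) {ν : ℝ} {α : EV n}
    (hα : α ∈ c.lamWnu (srefl γ) ν) : ν ≤ ⟪α, γ⟫ := by
  obtain ⟨⟨hαpos, hneg⟩, rfl⟩ := c.mem_lamWnu.mp hα
  exact c.nuu_le_inner (c.mem_R_of_mem_pos hαpos) (c.mem_R_of_mem_pos hγ)
    (c.inner_pos_of_neg_srefl_mem_pos hαpos hγ hneg)

lemma neg_srefl_mem_lamWnu_srefl {γ : EV n} (hγ : γ ∈ c.R) {ν : ℝ} {α : EV n}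
    (hα : α ∈ c.lamWnu (srefl γ) ν) : -srefl γ α ∈ c.lamWnu (srefl γ) ν := by
  obtain ⟨⟨hαpos, hneg⟩, hν⟩ := c.mem_lamWnu.mp hα
  have hsγ := c.isRootIsometry_srefl hγ
  refine c.mem_lamWnu.mpr ⟨⟨hneg, ?_⟩, ?_⟩
  · rwa [hsγ.map_neg, neg_neg, srefl_srefl (c.inner_self_ne_zero hγ)]
  · rwa [nuu_neg, hsγ.nuu_map]

lemma two_mul_mul_inner_rhoCheck {ν : ℝ} (hν : ν ≠ 0) (γ : EV n) :
    2 * ν * ⟪c.rhoCheck ν, γ⟫ = ∑ α ∈ c.pos.filter (fun α => nuu α = ν), ⟪α, γ⟫ := by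
  rw [rhoCheck, rho, real_inner_smul_left, real_inner_smul_left, sum_inner]
  field_simp

/-- The roots of `R₊ ∖ λ(s_γ)` cancel in pairs `{α, s_γ α}`. -/
lemma sum_inner_filter_eq_sum_lamWnu_srefl {γ : EV n} (hγ : γ ∈ c.R) (ν : ℝ) :
    ∑ α ∈ c.pos.filter (fun α => nuu α = ν), ⟪α, γ⟫ = ∑ α ∈ c.lamWnu (srefl γ) ν, ⟪α, γ⟫ := by
  have hγγ := c.inner_self_ne_zero hγ
  have hsγ := c.isRootIsometry_srefl hγ
  have hsplit : c.lamWnu (srefl γ) ν =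
      (c.pos.filter fun α => nuu α = ν).filter fun α => -srefl γ α ∈ c.pos := by
    rw [lamWnu, lamW, Finset.filter_comm]
  rw [hsplit, ← Finset.sum_filter_add_sum_filter_not _ (fun α => -srefl γ α ∈ c.pos),
    add_eq_left]
  refine Finset.sum_involution (fun α _ => srefl γ α)
    (fun α _ => by rw [inner_srefl_self hγγ, add_neg_cancel])
    (fun α _ hα hfix => hα (by linarith [inner_srefl_self hγγ α, congrArg (⟪·, γ⟫) hfix]))
    (fun α hα => ?_) (fun α _ => srefl_srefl hγγ α)
  simp only [Finset.mem_filter] at hα ⊢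
  obtain ⟨⟨hαpos, hν⟩, hneg⟩ := hα
  have hsR := hsγ.map_mem α (c.mem_R_of_mem_pos hαpos)
  refine ⟨⟨by simpa [c.neg_mem_pos_iff hsR] using hneg, by rwa [hsγ.nuu_map]⟩, ?_⟩
  rw [srefl_srefl hγγ]
  exact c.neg_notMem_pos hαpos

lemma indicator_add_card_le_two_mul_inner_rhoCheck {γ : EV n} (hγ : γ ∈ c.pos) {ν : ℝ}
    (hν : 0 < ν) {S : Finset (EV n)} (hS : S ⊆ c.lamWnu (srefl γ) ν) (hγS : γ ∉ S) :
    (if nuu γ = ν then 2 else 0) + (S.card : ℝ) ≤ 2 * ⟪c.rhoCheck ν, γ⟫ := by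
  have hγR := c.mem_R_of_mem_pos hγ
  have hlow : ∀ {α}, α ∈ c.lamWnu (srefl γ) ν → ν ≤ ⟪α, γ⟫ :=
    c.le_inner_of_mem_lamWnu_srefl hγ
  have hsum := c.two_mul_mul_inner_rhoCheck hν.ne' γ
  rw [c.sum_inner_filter_eq_sum_lamWnu_srefl hγR] at hsum
  have hnonneg : ∀ α ∈ c.lamWnu (srefl γ) ν, 0 ≤ ⟪α, γ⟫ := fun α hα => hν.le.trans (hlow hα)
  have hcard : (S.card : ℝ) * ν ≤ ∑ α ∈ S, ⟪α, γ⟫ := by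
    simpa using Finset.card_nsmul_le_sum S _ ν fun α hα => hlow (hS hα)
  refine le_of_mul_le_mul_left ?_ hν
  split_ifs with hγν
  · have hγmem : γ ∈ c.lamWnu (srefl γ) ν := by
      refine c.mem_lamWnu.mpr ⟨⟨hγ, ?_⟩, hγν⟩
      rwa [srefl_self (c.inner_self_ne_zero hγR), neg_neg]
    have hγγ : ⟪γ, γ⟫ = 2 * ν := by rw [← hγν, nuu]; ring
    have hinsert := Finset.sum_le_sum_of_subset_of_nonneg
      (Finset.insert_subset hγmem hS) fun α hα _ => hnonneg α hα
    rw [Finset.sum_insert hγS, hγγ] at hinsert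
    nlinarith
  · have hsub := Finset.sum_le_sum_of_subset_of_nonneg hS fun α hα _ => hnonneg α hα
    nlinarith

lemma indicator_add_card_le_inner_rhoCheck {γ : EV n} (hγ : γ ∈ c.pos) {ν : ℝ} (hν : 0 < ν)
    {T : Finset (EV n)} (hT : T ⊆ c.lamWnu (srefl γ) ν) (hγT : γ ∉ T)
    (hTdisj : ∀ t ∈ T, -srefl γ t ∉ T) :
    (if nuu γ = ν then 1 else 0) + (T.card : ℝ) ≤ ⟪c.rhoCheck ν, γ⟫ := by
  have hγR := c.mem_R_of_mem_pos hγ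
  have hγγ := c.inner_self_ne_zero hγR
  have hinj : Function.Injective fun t => -srefl γ t :=
    neg_injective.comp (c.isRootIsometry_srefl hγR).injective
  have hdisj : Disjoint T (T.image fun t => -srefl γ t) := by
    refine Finset.disjoint_left.mpr fun t ht ht' => ?_
    obtain ⟨t', ht', rfl⟩ := Finset.mem_image.mp ht'
    exact hTdisj _ ht (by rwa [neg_srefl_neg_srefl hγγ])
  have hS : T ∪ T.image (fun t => -srefl γ t) ⊆ c.lamWnu (srefl γ) ν :=
    Finset.union_subset hT
      (Finset.image_subset_iff.mpr fun t ht => c.neg_srefl_mem_lamWnu_srefl hγR (hT ht))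
  have hγS : γ ∉ T ∪ T.image (fun t => -srefl γ t) := by
    rw [Finset.mem_union, Finset.mem_image, not_or]
    refine ⟨hγT, fun ⟨t, ht, hγt⟩ => hγT ?_⟩
    have htγ : t = γ := by rw [← neg_srefl_neg_srefl hγγ t, hγt, srefl_self hγγ, neg_neg]
    exact htγ ▸ ht
  have hbound := c.indicator_add_card_le_two_mul_inner_rhoCheck hγ hν hS hγS
  rw [Finset.card_union_of_disjoint hdisj, Finset.card_image_of_injective _ hinj] at hbound
  push_cast at hbound
  split_ifs at hbound ⊢ <;> linarith

lemma neg_srefl_mem_pos_of_inner_pos {x y : EV n} (hy : y ∈ c.pos) (hx : -x ∈ c.pos)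
    (hxy : 0 < ⟪x, y⟫) : -srefl y x ∈ c.pos := by
  have hyR := c.mem_R_of_mem_pos hy
  have hxR : x ∈ c.R := by simpa using c.neg_mem _ (c.mem_R_of_mem_pos hx)
  rw [c.neg_mem_pos_iff (c.srefl_mem_R hyR hxR)]
  intro hs
  have hsum : -x + srefl y x = (-(2 * ⟪x, y⟫ / ⟪y, y⟫)) • y := by
    rw [srefl, neg_smul]
    abel
  have hk := c.pos_of_add_eq_smul hx hs hy hsum
  have : 0 < 2 * ⟪x, y⟫ / ⟪y, y⟫ := by have := c.inner_self_pos hyR; positivity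
  linarith

/-- On `R₊`, the indicator function of `λ_ν(v)`. -/
def lamNuIndicator (v : EV n → EV n) (ν : ℝ) (β : EV n) : ℝ :=
  if nuu β = ν ∧ -(v β) ∈ c.pos then 1 else 0

def negRhoCheckPairing (v : EV n → EV n) (ν : ℝ) (β : EV n) : ℝ :=
  if v β ∈ c.pos then 0 else -⟪c.rhoCheck ν, v β⟫

section Pairing

variable {c} {v : EV n → EV n} (hv : c.IsRootIsometry v) {ν : ℝ} {β : EV n}
include hv

lemma lamNuIndicator_le_srefl (hβ : β ∈ c.R) (hvβ : v β ∈ c.pos) {z : EV n}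
    (hz : 0 < ⟪z, β⟫) : c.lamNuIndicator v ν z ≤ c.lamNuIndicator v ν (srefl β z) := by
  unfold lamNuIndicator
  split_ifs with hzν hsz
  · exact le_rfl
  · refine absurd ⟨by rw [(c.isRootIsometry_srefl hβ).nuu_map, hzν.1], ?_⟩ hsz
    rw [hv.map_srefl]
    exact c.neg_srefl_mem_pos_of_inner_pos hvβ hzν.2 (by rwa [hv.inner_map_map])
  all_goals norm_num

lemma lamNuIndicator_le_srefl_add (hβ : β ∈ c.R) {z : EV n} (hz : z ∈ c.R) :
    c.lamNuIndicator v ν z ≤ c.lamNuIndicator v ν (srefl β z) +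
      if nuu z = ν ∧ -(v z) ∈ c.pos ∧ v (srefl β z) ∈ c.pos then 1 else 0 := by
  unfold lamNuIndicator
  by_cases hzν : nuu z = ν ∧ -(v z) ∈ c.pos
  · by_cases hvs : v (srefl β z) ∈ c.pos
    · have hcond : nuu z = ν ∧ -(v z) ∈ c.pos ∧ v (srefl β z) ∈ c.pos := ⟨hzν.1, hzν.2, hvs⟩
      rw [if_pos hzν, if_pos hcond]
      split_ifs <;> norm_num
    · have hvsR := hv.map_mem _ (c.srefl_mem_R hβ hz)
      rw [if_pos hzν, if_pos ⟨by rw [(c.isRootIsometry_srefl hβ).nuu_map, hzν.1],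
        (c.neg_mem_pos_iff hvsR).mpr hvs⟩]
      split_ifs <;> norm_num
  · rw [if_neg hzν]
    split_ifs <;> norm_num

/-- Each `z` counted on the left yields the two roots `-v z` and `v (s_β z)` of `λ_ν(s_γ)`,
`γ = -v β`. -/
lemma lamNuIndicator_add_card_le_inner_rhoCheck (hν : 0 < ν) (hβ : β ∈ c.R) (hvβ : v β ∉ c.pos)
    {B : Finset (EV n)} (hβB : β ∉ B) (hB : ∀ z ∈ B, ∀ z' ∈ B, srefl β z' ≠ -z) :
    c.lamNuIndicator v ν β +
        (B.filter fun z => nuu z = ν ∧ -(v z) ∈ c.pos ∧ v (srefl β z) ∈ c.pos).card ≤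
      ⟪c.rhoCheck ν, -v β⟫ := by
  have hγ : -v β ∈ c.pos := (c.neg_mem_pos_iff (hv.map_mem β hβ)).mpr hvβ
  have hsγ : ∀ z, srefl (-v β) (-v z) = -v (srefl β z) := fun z => by
    rw [srefl_neg_left, srefl_neg, hv.map_srefl]
  have hFβ : c.lamNuIndicator v ν β = if nuu (-v β) = ν then 1 else 0 := by
    simp only [lamNuIndicator, nuu_neg, hv.nuu_map, hγ, and_true]
  rw [hFβ, ← Finset.card_image_of_injective _ (neg_injective.comp hv.injective)]
  refine c.indicator_add_card_le_inner_rhoCheck hγ hν ?_ ?_ ?_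
  · refine Finset.image_subset_iff.mpr fun z hz => c.mem_lamWnu.mpr ?_
    obtain ⟨-, hzν, hvz, hvs⟩ := Finset.mem_filter.mp hz
    exact ⟨⟨hvz, by simpa [hsγ] using hvs⟩, by rwa [Function.comp_apply, nuu_neg, hv.nuu_map]⟩
  · intro hmem
    obtain ⟨z, hz, hzβ⟩ := Finset.mem_image.mp hmem
    exact hβB (hv.injective (neg_injective hzβ) ▸ (Finset.mem_filter.mp hz).1)
  · intro t ht hmem
    obtain ⟨z, hz, rfl⟩ := Finset.mem_image.mp ht
    obtain ⟨z', hz', hz'z⟩ := Finset.mem_image.mp hmem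
    refine hB z' (Finset.mem_filter.mp hz').1 z (Finset.mem_filter.mp hz).1 (hv.injective ?_)
    simp only [Function.comp_apply] at hz'z
    rw [hv.map_neg, ← neg_neg (v (srefl β z)), ← hsγ, hz'z]

theorem lamNuIndicator_add_sum_le (hν : 0 < ν) (hβ : β ∈ c.pos) {B : Finset (EV n)}
    (hBR : B ⊆ c.R) (hβB : β ∉ B) (hBβ : ∀ z ∈ B, 0 < ⟪z, β⟫)
    (hB : ∀ z ∈ B, ∀ z' ∈ B, srefl β z' ≠ -z) :
    c.lamNuIndicator v ν β + ∑ z ∈ B, c.lamNuIndicator v ν z ≤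
      c.negRhoCheckPairing v ν β + ∑ z ∈ B, c.lamNuIndicator v ν (srefl β z) := by
  have hβR := c.mem_R_of_mem_pos hβ
  by_cases hvβ : v β ∈ c.pos
  · have hFβ : c.lamNuIndicator v ν β = 0 := if_neg fun h => c.neg_notMem_pos hvβ h.2
    rw [hFβ, negRhoCheckPairing, if_pos hvβ, zero_add, zero_add]
    exact Finset.sum_le_sum fun z hz => lamNuIndicator_le_srefl hv hβR hvβ (hBβ z hz)
  have hstep : ∑ z ∈ B, c.lamNuIndicator v ν z ≤ ∑ z ∈ B, c.lamNuIndicator v ν (srefl β z) +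
      (B.filter fun z => nuu z = ν ∧ -(v z) ∈ c.pos ∧ v (srefl β z) ∈ c.pos).card := by
    rw [Finset.card_filter, Nat.cast_sum, ← Finset.sum_add_distrib]
    exact Finset.sum_le_sum fun z hz => by
      simpa using lamNuIndicator_le_srefl_add hv hβR (hBR hz) (ν := ν)
  have hcount := lamNuIndicator_add_card_le_inner_rhoCheck hv hν hβR hvβ hβB hB
  rw [negRhoCheckPairing, if_neg hvβ, ← inner_neg_right]
  linarith

end Pairing

lemma map_mem_pos_of_notMem_lamW {u : EV n → EV n} (hu : c.IsRootIsometry u) {z : EV n}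
    (hz : z ∈ c.pos) (hzu : z ∉ c.lamW u) : u z ∈ c.pos := by
  by_contra h
  exact hzu (c.mem_lamW.mpr ⟨hz, (c.neg_mem_pos_iff (hu.map_mem z (c.mem_R_of_mem_pos hz))).mpr h⟩)

lemma notMem_lamW_of_map_eq_simple {u : EV n → EV n} {β : EV n} {j : Fin n}
    (huβ : u β = c.simple j) : β ∉ c.lamW u :=
  fun h => c.neg_notMem_pos (c.simple_pos j) (huβ ▸ (c.mem_lamW.mp h).2)

section Sdiff

variable {c} {x y : EV n → EV n} (hx : c.IsRootIsometry x) (hy : c.IsRootIsometry y)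
  (hxy : c.lamW x ⊆ c.lamW y) {β : EV n} (hβ : β ∈ c.pos) {j : Fin n}
  (hyβ : y β = c.simple j)

include hy hβ hyβ

/-- `y s_β = s_j y` since `y β = α_j`; and `s_j` permutes `R₊ ∖ {α_j}`. -/
lemma neg_map_srefl_mem_pos {z : EV n} (hz : z ∈ c.lamW y) : -y (srefl β z) ∈ c.pos := by
  obtain ⟨hzpos, hyz⟩ := c.mem_lamW.mp hz
  have hne : -y z ≠ c.simple j := by
    intro h
    have hzβ : -z = β := hy.injective (by rw [hy.map_neg, h, hyβ])
    exact c.neg_notMem_pos hzpos (hzβ ▸ hβ)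
  rw [hy.map_srefl, hyβ, ← neg_neg (y z), srefl_neg, neg_neg]
  exact c.srefl_simple_mem_pos hyz hne

lemma srefl_ne_neg_of_mem_lamW {z z' : EV n} (hz : z ∈ c.lamW y) (hz' : z' ∈ c.lamW y) :
    srefl β z' ≠ -z := by
  intro h
  have hyz := neg_map_srefl_mem_pos hy hβ hyβ hz'
  rw [h, hy.map_neg, neg_neg] at hyz
  exact c.neg_notMem_pos hyz (c.mem_lamW.mp hz).2

include hx hxy

lemma srefl_mem_sdiff {z : EV n} (hz : z ∈ c.lamW y \ c.lamW x)
    (hxz : x (srefl β z) ∈ c.pos) : srefl β z ∈ c.lamW y \ c.lamW x := by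
  obtain ⟨hzy, -⟩ := Finset.mem_sdiff.mp hz
  have hneg := neg_map_srefl_mem_pos hy hβ hyβ hzy
  have hsR := c.srefl_mem_R (c.mem_R_of_mem_pos hβ) (c.mem_R_of_mem_pos (c.mem_lamW.mp hzy).1)
  have hspos : srefl β z ∈ c.pos := by
    by_contra hs
    have hmem : -srefl β z ∈ c.lamW x :=
      c.mem_lamW.mpr ⟨(c.neg_mem_pos_iff hsR).mpr hs, by rwa [hx.map_neg, neg_neg]⟩
    have hys := (c.mem_lamW.mp (hxy hmem)).2
    rw [hy.map_neg, neg_neg] at hys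
    exact c.neg_notMem_pos hys hneg
  exact Finset.mem_sdiff.mpr
    ⟨c.mem_lamW.mpr ⟨hspos, hneg⟩, fun h => c.neg_notMem_pos hxz (c.mem_lamW.mp h).2⟩

omit hy in
lemma inner_pos_of_map_srefl_notMem_pos {z : EV n} (hz : z ∈ c.lamW y \ c.lamW x)
    (hxz : x (srefl β z) ∉ c.pos) : 0 < ⟪z, β⟫ := by
  obtain ⟨hzy, hzx⟩ := Finset.mem_sdiff.mp hz
  have hxzpos := c.map_mem_pos_of_notMem_lamW hx (c.mem_lamW.mp hzy).1 hzx
  have hxβ := c.map_mem_pos_of_notMem_lamW hx hβ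
    fun h => c.notMem_lamW_of_map_eq_simple hyβ (hxy h)
  have hsR := c.srefl_mem_R (c.mem_R_of_mem_pos hxβ) (c.mem_R_of_mem_pos hxzpos)
  rw [hx.map_srefl, ← c.neg_mem_pos_iff hsR] at hxz
  rw [← hx.inner_map_map]
  exact c.inner_pos_of_neg_srefl_mem_pos hxzpos hxβ hxz

theorem lamNuIndicator_add_sum_sdiff_le {v : EV n → EV n} (hv : c.IsRootIsometry v) {ν : ℝ}
    (hν : 0 < ν) :
    c.lamNuIndicator v ν β + ∑ z ∈ c.lamW y \ c.lamW x, c.lamNuIndicator v ν z ≤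
      c.negRhoCheckPairing v ν β +
        ∑ z ∈ c.lamW y \ c.lamW x, c.lamNuIndicator v ν (srefl β z) := by
  have hββ := c.inner_self_ne_zero (c.mem_R_of_mem_pos hβ)
  have hXpos : ∀ z ∈ c.lamW y \ c.lamW x, z ∈ c.pos :=
    fun z hz => (c.mem_lamW.mp (Finset.mem_sdiff.mp hz).1).1
  set A := (c.lamW y \ c.lamW x).filter fun z => x (srefl β z) ∈ c.pos
  set B := (c.lamW y \ c.lamW x).filter fun z => x (srefl β z) ∉ c.pos
  have hmaps : ∀ z ∈ A, srefl β z ∈ A := fun z hz => by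
    obtain ⟨hzX, hxz⟩ := Finset.mem_filter.mp hz
    refine Finset.mem_filter.mpr ⟨srefl_mem_sdiff hx hy hxy hβ hyβ hzX hxz, ?_⟩
    rw [srefl_srefl hββ]
    exact c.map_mem_pos_of_notMem_lamW hx (hXpos z hzX) (Finset.mem_sdiff.mp hzX).2
  have hA : ∑ z ∈ A, c.lamNuIndicator v ν (srefl β z) = ∑ z ∈ A, c.lamNuIndicator v ν z :=
    Finset.sum_nbij' (srefl β) (srefl β) hmaps hmaps (fun z _ => srefl_srefl hββ z)
      (fun z _ => srefl_srefl hββ z) fun _ _ => rfl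
  have hB := lamNuIndicator_add_sum_le hv hν hβ (B := B)
    (fun z hz => c.mem_R_of_mem_pos (hXpos z (Finset.mem_filter.mp hz).1))
    (fun h => c.notMem_lamW_of_map_eq_simple hyβ
      (Finset.mem_sdiff.mp (Finset.mem_filter.mp h).1).1)
    (fun z hz => inner_pos_of_map_srefl_notMem_pos hx hxy hβ hyβ (Finset.mem_filter.mp hz).1
      (Finset.mem_filter.mp hz).2)
    (fun z hz z' hz' => srefl_ne_neg_of_mem_lamW hy hβ hyβ
      (Finset.mem_sdiff.mp (Finset.mem_filter.mp hz).1).1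
      (Finset.mem_sdiff.mp (Finset.mem_filter.mp hz').1).1)
  rw [← Finset.sum_filter_add_sum_filter_not _ fun z => x (srefl β z) ∈ c.pos,
    ← Finset.sum_filter_add_sum_filter_not (c.lamW y \ c.lamW x) fun z => x (srefl β z) ∈ c.pos,
    hA]
  linarith

end Sdiff

end RootCtx

open RootCtx in
theorem t_order_inequality_nonaffine_general {n : ℕ} (c : RootCtx n)
    (L : List (Fin n)) (hred : L.length = c.lenW (c.wWord L))
    (r i : Fin L.length) (hri : r ≤ i)
    (v : EV n → EV n) (hv : c.IsWeyl v)
    (ν : ℝ) (hν : ∃ γ ∈ c.R, nuu γ = ν)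
    (f : EV n → ℝ)
    (hf : f = fun β => if nuu β = ν ∧ -(v β) ∈ c.pos then 1 else 0)
    (g : EV n → ℝ)
    (hg : g = fun β => if v β ∈ c.pos then 0 else -⟪c.rhoCheck ν, v β⟫) :
    (∑ a ∈ Finset.univ.filter (fun a : Fin L.length => r ≤ a ∧ a ≤ i),
        f (c.lamSeqW L a))
      ≤ g (c.lamSeqW L i) +
        ∑ a ∈ Finset.univ.filter (fun a : Fin L.length => r ≤ a ∧ a < i),
          f (srefl (c.lamSeqW L i) (c.lamSeqW L a)) := by
  obtain ⟨γ, hγ, rfl⟩ := hν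
  have hfilter : Finset.univ.filter (fun a : Fin L.length => r ≤ a ∧ a ≤ i) =
      insert i (Finset.univ.filter fun a : Fin L.length => r ≤ a ∧ a < i) := by
    ext a
    simp only [Finset.mem_filter, Finset.mem_univ, true_and, Finset.mem_insert, Fin.ext_iff,
      Fin.le_def, Fin.lt_def]
    have := Fin.le_def.mp hri
    omega
  rw [hfilter, Finset.sum_insert (by simp), sum_filter_lamSeqW hred,
    sum_filter_lamSeqW hred fun z => f (srefl (c.lamSeqW L i) z),
    show f = c.lamNuIndicator v (nuu γ) from hf, show g = c.negRhoCheckPairing v (nuu γ) from hg]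
  exact lamNuIndicator_add_sum_sdiff_le (c.isRootIsometry_wWord _) (c.isRootIsometry_wWord _)
    (lamW_wPrefix_mono hred hri i.isLt.le) (lamSeqW_mem_pos hred i) (c.wPrefix_lamSeqW L i)
    hv.isRootIsometry (c.nuu_pos hγ)

open RootCtx in
/-- Lemma 5.3, Part A, inequality (5.2).  Let u ∈ W with reduced
word L and λ-sequence α¹,…,α^l, let r ≤ i, w ∈ W (with inverse v) and ν a ν-value.
With f and g as below, g(αⁱ) + Σ_{a=r}^{i−1} f(s_{αⁱ}(α^a)) ≥ Σ_{a=r}^{i} f(α^a). -/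
theorem t_order_inequality_nonaffine {n : ℕ} (c : RootCtx n)
    (L : List (Fin n)) (hred : L.length = c.lenW (c.wWord L))
    (r i : Fin L.length) (hri : r ≤ i)
    (w v : EV n → EV n) (hw : c.IsWeyl w) (hv : c.IsWeyl v)
    (hinv : ∀ x, v (w x) = x ∧ w (v x) = x)
    (ν : ℝ) (hν : ∃ γ ∈ c.R, nuu γ = ν)
    (f : EV n → ℝ)
    (hf : f = fun β => if nuu β = ν ∧ -(v β) ∈ c.pos then 1 else 0)
    (g : EV n → ℝ)
    (hg : g = fun β => if v β ∈ c.pos then 0 else -⟪c.rhoCheck ν, v β⟫) :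
    (∑ a ∈ Finset.univ.filter (fun a : Fin L.length => r ≤ a ∧ a ≤ i),
        f (c.lamSeqW L a))
      ≤ g (c.lamSeqW L i) +
        ∑ a ∈ Finset.univ.filter (fun a : Fin L.length => r ≤ a ∧ a < i),
          f (srefl (c.lamSeqW L i) (c.lamSeqW L a)) :=
  t_order_inequality_nonaffine_general c L hred r i hri v hv ν hν f hf g hg
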